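/- The trigonometric polynomial f₁(α,β,γ) = |exp(i(α+β)) + exp(iγ)|² = 2 + 2·cos(α+β−γ) is extremal in Q(1,1,1): whenever f₁ = g + h with g, h ∈ Q(1,1,1), there exists a real constant c ≥ 0 with g = c·f₁. -/
import Mathlib


open Complex ComplexOrder

noncomputable section

/-- The lattice box `S(1,1,1) = {0,1}³`. -/
def Sbox (N₁ N₂ N₃ : ℕ) : Finset (ℤ × ℤ × ℤ) :=
  Finset.Icc (0, 0, 0) ((N₁ : ℤ), (N₂ : ℤ), (N₃ : ℤ))

/-- The character `exp(i(kα + ℓβ + mγ))`. -/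
def eChar (δ : ℤ × ℤ × ℤ) (v : ℝ × ℝ × ℝ) : ℂ :=
  Complex.exp (Complex.I *
    ((δ.1 : ℂ) * (v.1 : ℂ) + (δ.2.1 : ℂ) * (v.2.1 : ℂ) + (δ.2.2 : ℂ) * (v.2.2 : ℂ)))

/-- `Q(N₁,N₂,N₃)`: finite sums of squared moduli of trig polynomials with frequencies in `S`. -/
def QSet (N₁ N₂ N₃ : ℕ) : Set ((ℝ × ℝ × ℝ) → ℂ) :=
  { f | ∃ (r : ℕ) (q : Fin r → (ℤ × ℤ × ℤ) → ℂ),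
      f = fun v => ∑ j, (‖∑ p ∈ Sbox N₁ N₂ N₃, q j p * eChar p v‖ : ℂ) ^ 2 }


/-- Shorthand for the unit character `e^{it}`. -/
def Xc (t : ℝ) : ℂ := Complex.exp (Complex.I * (t : ℂ))

lemma sum8 (F : ℤ×ℤ×ℤ → ℂ) : ∑ p ∈ Sbox 1 1 1, F p =
    F (0,0,0) + F (0,0,1) + F (0,1,0) + F (0,1,1) + F (1,0,0) + F (1,0,1) + F (1,1,0) + F (1,1,1) := by
  rw [show Sbox 1 1 1 = ({(0,0,0),(0,0,1),(0,1,0),(0,1,1),(1,0,0),(1,0,1),(1,1,0),(1,1,1)} : Finset (ℤ×ℤ×ℤ)) by decide]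
  rw [Finset.sum_insert (by decide), Finset.sum_insert (by decide), Finset.sum_insert (by decide),
    Finset.sum_insert (by decide), Finset.sum_insert (by decide), Finset.sum_insert (by decide),
    Finset.sum_insert (by decide), Finset.sum_singleton]
  ring

lemma Xc_add (s t : ℝ) : Xc (s + t) = Xc s * Xc t := by
  simp only [Xc, ← Complex.exp_add]; congr 1; push_cast; ring

lemma Xc_zero : Xc 0 = 1 := by simp [Xc]

lemma Xc_pi : Xc Real.pi = -1 := by rw [Xc, mul_comm, Complex.exp_pi_mul_I]

lemma Xc_half : Xc (Real.pi / 2) = I := by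
  rw [Xc, mul_comm]; push_cast; rw [Complex.exp_mul_I]; simp

lemma Fexpand (u : (ℤ×ℤ×ℤ) → ℂ) (v : ℝ×ℝ×ℝ) :
    ∑ p ∈ Sbox 1 1 1, u p * eChar p v =
      u (0,0,0) + u (0,0,1) * Xc v.2.2 + u (0,1,0) * Xc v.2.1
      + u (0,1,1) * (Xc v.2.1 * Xc v.2.2) + u (1,0,0) * Xc v.1
      + u (1,0,1) * (Xc v.1 * Xc v.2.2) + u (1,1,0) * (Xc v.1 * Xc v.2.1)
      + u (1,1,1) * (Xc v.1 * Xc v.2.1 * Xc v.2.2) := by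
  rw [sum8]
  simp only [eChar, Xc, ← Complex.exp_add]
  norm_num
  ring_nf

lemma Xc_plane (α β : ℝ) : Xc (α + β - Real.pi) = -(Xc α * Xc β) := by
  have h1 : Xc (α + β - Real.pi) * Xc Real.pi = Xc α * Xc β := by
    rw [← Xc_add, ← Xc_add]; congr 1; ring
  rw [Xc_pi] at h1
  linear_combination -h1

lemma exp_pair (α β : ℝ) :
    Complex.exp (Complex.I * ((α : ℂ) + (β : ℂ))) = Xc α * Xc β := by
  rw [← Xc_add]; simp only [Xc]; push_cast; ring_nf

lemma vanish_struct (u : (ℤ×ℤ×ℤ) → ℂ)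
    (hu : ∀ α β : ℝ, ∑ p ∈ Sbox 1 1 1, u p * eChar p (α, β, α + β - Real.pi) = 0) :
    ∀ v : ℝ×ℝ×ℝ, ∑ p ∈ Sbox 1 1 1, u p * eChar p v
      = u (1,1,0) * (Xc v.1 * Xc v.2.1 + Xc v.2.2) := by
  have hE : ∀ α β : ℝ,
      u (0,0,0) + u (1,0,0) * Xc α + u (0,1,0) * Xc β
        + (u (1,1,0) - u (0,0,1)) * (Xc α * Xc β)
        - u (1,0,1) * ((Xc α)^2 * Xc β) - u (0,1,1) * (Xc α * (Xc β)^2)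
        - u (1,1,1) * ((Xc α)^2 * (Xc β)^2) = 0 := by
    intro α β
    have h0 := hu α β
    rw [Fexpand] at h0
    simp only at h0
    rw [Xc_plane α β] at h0
    linear_combination h0
  have hB : ∀ β : ℝ, u (1,0,0) + (u (1,1,0) - u (0,0,1)) * Xc β - u (0,1,1) * (Xc β)^2 = 0 := by
    intro β
    have e1 := hE 0 β; have e2 := hE Real.pi β
    rw [Xc_zero] at e1; rw [Xc_pi] at e2
    linear_combination (e1 - e2) / 2
  have hA : ∀ β : ℝ, u (0,0,0) + u (0,1,0) * Xc β = 0 := by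
    intro β
    have e1 := hE 0 β; have e2 := hE Real.pi β; have e3 := hE (Real.pi/2) β
    rw [Xc_zero] at e1; rw [Xc_pi] at e2; rw [Xc_half, Complex.I_sq] at e3
    linear_combination e1/4 + e2/4 + e3/2 - (I/2) * hB β
  have hC : ∀ β : ℝ, u (1,0,1) * Xc β + u (1,1,1) * (Xc β)^2 = 0 := by
    intro β
    have e1 := hE 0 β; have e2 := hE Real.pi β
    rw [Xc_zero] at e1; rw [Xc_pi] at e2
    linear_combination hA β - (e1 + e2)/2
  have q000 : u (0,0,0) = 0 := by
    have a1 := hA 0; have a2 := hA Real.pi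
    rw [Xc_zero] at a1; rw [Xc_pi] at a2
    linear_combination (a1 + a2)/2
  have q010 : u (0,1,0) = 0 := by
    have a1 := hA 0; rw [Xc_zero] at a1; linear_combination a1 - q000
  have q101 : u (1,0,1) = 0 := by
    have a1 := hC 0; have a2 := hC Real.pi
    rw [Xc_zero] at a1; rw [Xc_pi] at a2
    linear_combination (a1 - a2)/2
  have q111 : u (1,1,1) = 0 := by
    have a1 := hC 0; rw [Xc_zero] at a1; linear_combination a1 - q101
  have q100 : u (1,0,0) = 0 := by
    have a1 := hB 0; have a2 := hB Real.pi; have a3 := hB (Real.pi/2)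
    rw [Xc_zero] at a1; rw [Xc_pi] at a2; rw [Xc_half, Complex.I_sq] at a3
    linear_combination (a1 + a2)/4 + a3/2 - (I/4) * (a1 - a2)
  have q110 : u (1,1,0) - u (0,0,1) = 0 := by
    have a1 := hB 0; have a2 := hB Real.pi
    rw [Xc_zero] at a1; rw [Xc_pi] at a2
    linear_combination (a1 - a2)/2
  have q011 : u (0,1,1) = 0 := by
    have a1 := hB 0; rw [Xc_zero] at a1
    linear_combination q100 + q110 - a1
  intro v
  rw [Fexpand]
  linear_combination q000 + q010 * Xc v.2.1 + q011 * (Xc v.2.1 * Xc v.2.2)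
    + q100 * Xc v.1 + q101 * (Xc v.1 * Xc v.2.2)
    + q111 * (Xc v.1 * Xc v.2.1 * Xc v.2.2) - q110 * Xc v.2.2

/-- Proposition 3: the trigonometric polynomial f₁(α,β,γ) = |e^{i(α+β)} + e^{iγ}|² = 2 + 2cos(α+β−γ)
is extremal in `Q(1,1,1)`. -/
theorem extremal_f1 (f₁ : ℝ × ℝ × ℝ → ℂ)
    (hf : f₁ = fun v => (‖Complex.exp (Complex.I * ((v.1 : ℂ) + (v.2.1 : ℂ))) + Complex.exp (Complex.I * (v.2.2 : ℂ))‖ : ℂ) ^ 2) :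
    ∀ g h : (ℝ × ℝ × ℝ) → ℂ, g ∈ QSet 1 1 1 → h ∈ QSet 1 1 1 → f₁ = g + h →
      ∃ c : ℝ, 0 ≤ c ∧ g = fun v => (c : ℂ) * f₁ v := by
  intro g h hg hh hsum
  obtain ⟨r, q, rfl⟩ := hg
  obtain ⟨r', q', rfl⟩ := hh
  have hplane : ∀ α β : ℝ, f₁ (α, β, α + β - Real.pi) = 0 := by
    intro α β
    rw [hf]
    simp only
    rw [exp_pair α β, show Complex.exp (Complex.I * ((α + β - Real.pi : ℝ) : ℂ)) = Xc (α + β - Real.pi) from rfl,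
      Xc_plane α β]
    simp
  have hzero : ∀ (j : Fin r) (α β : ℝ),
      ∑ p ∈ Sbox 1 1 1, q j p * eChar p (α, β, α + β - Real.pi) = 0 := by
    intro j α β
    have hv := congrFun hsum (α, β, α + β - Real.pi)
    rw [hplane α β] at hv
    simp only [Pi.add_apply] at hv
    have hv' : (0:ℝ) = (∑ j, ‖∑ p ∈ Sbox 1 1 1, q j p * eChar p (α, β, α + β - Real.pi)‖ ^ 2)
        + (∑ j, ‖∑ p ∈ Sbox 1 1 1, q' j p * eChar p (α, β, α + β - Real.pi)‖ ^ 2) := by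
      exact_mod_cast hv
    have t1 : (0:ℝ) ≤ ∑ j, ‖∑ p ∈ Sbox 1 1 1, q j p * eChar p (α, β, α + β - Real.pi)‖ ^ 2 :=
      Finset.sum_nonneg fun _ _ => sq_nonneg _
    have t2 : (0:ℝ) ≤ ∑ j, ‖∑ p ∈ Sbox 1 1 1, q' j p * eChar p (α, β, α + β - Real.pi)‖ ^ 2 :=
      Finset.sum_nonneg fun _ _ => sq_nonneg _
    have hs1 : ∑ j, ‖∑ p ∈ Sbox 1 1 1, q j p * eChar p (α, β, α + β - Real.pi)‖ ^ 2 = 0 := by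
      linarith
    have := (Finset.sum_eq_zero_iff_of_nonneg (fun i _ => sq_nonneg _)).mp hs1 j (Finset.mem_univ j)
    have hn : ‖∑ p ∈ Sbox 1 1 1, q j p * eChar p (α, β, α + β - Real.pi)‖ = 0 := by
      nlinarith [norm_nonneg (∑ p ∈ Sbox 1 1 1, q j p * eChar p (α, β, α + β - Real.pi))]
    exact norm_eq_zero.mp hn
  have hstruct := fun j => vanish_struct (q j) (hzero j)
  refine ⟨∑ j, ‖q j (1,1,0)‖ ^ 2, Finset.sum_nonneg fun _ _ => sq_nonneg _, ?_⟩
  funext v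
  rw [hf]
  simp only
  have hterm : ∀ j : Fin r, (‖∑ p ∈ Sbox 1 1 1, q j p * eChar p v‖ : ℂ) ^ 2
      = (‖q j (1,1,0)‖ : ℂ) ^ 2 *
        (‖Complex.exp (Complex.I * ((v.1 : ℂ) + (v.2.1 : ℂ))) + Complex.exp (Complex.I * (v.2.2 : ℂ))‖ : ℂ) ^ 2 := by
    intro j
    rw [hstruct j v, exp_pair v.1 v.2.1,
      show Complex.exp (Complex.I * ((v.2.2 : ℝ) : ℂ)) = Xc v.2.2 from rfl]
    rw [norm_mul]
    push_cast
    ring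
  rw [Finset.sum_congr rfl (fun j _ => hterm j), ← Finset.sum_mul]
  congr 1
  push_cast
  ring
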